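/- Consider the RSSD iteration on the unit sphere S^{n−1} (n ≥ 1) applied to a smoothing function f̃ of f : ℝⁿ → ℝ, and let K = {ℓ : ‖η_ℓ‖ ≤ δ_ℓ}. Then any accumulation point x* of the subsequence (x_ℓ)_{ℓ ∈ K} is a stationary point of f associated with f̃ on the sphere: liminf_{x → x*, x ∈ S^{n−1}, μ → 0⁺} ‖Proj_x(∇_x f̃(x, μ))‖ = 0; equivalently, there exist sequences z_k ∈ S^{n−1} with z_k → x* and μ_k → 0⁺ such that Proj_{z_k}(∇_x f̃(z_k, μ_k)) → 0. -/

import Mathlib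

open Filter Topology

/-- The orthogonal projection onto the tangent space of the unit sphere at `x`:
`Proj_x(v) = v − ⟨v, x⟩x`. -/
noncomputable def sphereProj {n : ℕ} (x v : EuclideanSpace ℝ (Fin n)) :
    EuclideanSpace ℝ (Fin n) :=
  v - (inner ℝ v x : ℝ) • x

/-- The RSSD search direction `η = −Proj_x(∇_x f̃(x, μ))` at the point `x` with
smoothing parameter `μ`. -/
noncomputable def rssdDir {n : ℕ} (ft : EuclideanSpace ℝ (Fin n) → ℝ → ℝ)
    (x : EuclideanSpace ℝ (Fin n)) (μ : ℝ) : EuclideanSpace ℝ (Fin n) :=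
  -sphereProj x (gradient (fun y => ft y μ) x)

/-- The Armijo condition at `x ∈ S^{n−1}` with parameter `μ`, stepsize `t`, slope
parameter `σ` and direction `η`, along the retraction `R_x(ξ) = (x+ξ)/‖x+ξ‖`:
`f̃((x + tη)/‖x + tη‖, μ) ≤ f̃(x, μ) − σ t ‖η‖²`. -/
def ArmijoCond {n : ℕ} (ft : EuclideanSpace ℝ (Fin n) → ℝ → ℝ)
    (x : EuclideanSpace ℝ (Fin n)) (μ σ t : ℝ) (η : EuclideanSpace ℝ (Fin n)) : Prop :=
  ft ((‖x + t • η‖)⁻¹ • (x + t • η)) μ ≤ ft x μ - σ * t * ‖η‖ ^ 2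

/-- The RSSD iteration on the unit sphere `S^{n−1}`: parameters
`θ_μ, θ_δ, β, σ ∈ (0,1)`, `ᾱ > 0`; initial data `x 0 ∈ S^{n−1}`, `μ 0 > 0`, `δ 0 > 0`;
`η_ℓ = −Proj_{x_ℓ}(∇_x f̃(x_ℓ, μ_ℓ))`; if `‖η_ℓ‖ ≤ δ_ℓ` then `μ_{ℓ+1} = θ_μ μ_ℓ`,
`δ_{ℓ+1} = θ_δ δ_ℓ`, `x_{ℓ+1} = x_ℓ`; otherwise `μ_{ℓ+1} = μ_ℓ`, `δ_{ℓ+1} = δ_ℓ`, and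
`x_{ℓ+1} = R_{x_ℓ}(β^{m_ℓ} ᾱ η_ℓ)` where `m_ℓ` is the smallest nonnegative integer
satisfying the Armijo condition. -/
structure IsRSSDIteration {n : ℕ} (ft : EuclideanSpace ℝ (Fin n) → ℝ → ℝ)
    (θμ θδ β σ abar : ℝ) (x : ℕ → EuclideanSpace ℝ (Fin n)) (μ δ : ℕ → ℝ) : Prop where
  smooth : ∀ m > (0 : ℝ), ContDiff ℝ 1 (fun y => ft y m)
  hθμ : 0 < θμ ∧ θμ < 1
  hθδ : 0 < θδ ∧ θδ < 1
  hβ : 0 < β ∧ β < 1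
  hσ : 0 < σ ∧ σ < 1
  habar : 0 < abar
  hμ0 : 0 < μ 0
  hδ0 : 0 < δ 0
  sphere : ∀ ℓ, ‖x ℓ‖ = 1
  step_small : ∀ ℓ, ‖rssdDir ft (x ℓ) (μ ℓ)‖ ≤ δ ℓ →
    μ (ℓ + 1) = θμ * μ ℓ ∧ δ (ℓ + 1) = θδ * δ ℓ ∧ x (ℓ + 1) = x ℓ
  step_big : ∀ ℓ, ¬ ‖rssdDir ft (x ℓ) (μ ℓ)‖ ≤ δ ℓ →
    μ (ℓ + 1) = μ ℓ ∧ δ (ℓ + 1) = δ ℓ ∧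
    ∃ m : ℕ,
      ArmijoCond ft (x ℓ) (μ ℓ) σ (β ^ m * abar) (rssdDir ft (x ℓ) (μ ℓ)) ∧
      (∀ j : ℕ, j < m →
        ¬ ArmijoCond ft (x ℓ) (μ ℓ) σ (β ^ j * abar) (rssdDir ft (x ℓ) (μ ℓ))) ∧
      x (ℓ + 1) = (‖x ℓ + (β ^ m * abar) • rssdDir ft (x ℓ) (μ ℓ)‖)⁻¹ •
        (x ℓ + (β ^ m * abar) • rssdDir ft (x ℓ) (μ ℓ))


/-- `ft` is a smoothing function of `f : ℝⁿ → ℝ` with constant `κ > 0` and function `ω`. -/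
def IsSmoothingFun {n : ℕ} (f : EuclideanSpace ℝ (Fin n) → ℝ)
    (ft : EuclideanSpace ℝ (Fin n) → ℝ → ℝ) (κ : ℝ) (ω : ℝ → ℝ) : Prop :=
  0 < κ ∧ (∀ μ > (0 : ℝ), ContDiff ℝ 1 (fun x => ft x μ)) ∧
    (∀ μ > (0 : ℝ), 0 < ω μ) ∧ Filter.Tendsto ω (nhdsWithin 0 (Set.Ioi 0)) (nhds 0) ∧
    ∀ x, ∀ μ > (0 : ℝ), |ft x μ - f x| ≤ κ * ω μ


/- Each index `ℓ ∈ K` shrinks both `μ` and `δ` by the fixed factors `θ_μ, θ_δ < 1`, while the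
other steps leave them unchanged; so along an infinite subsequence of `K` both tend to `0`.
At `ℓ ∈ K` the Riemannian gradient `Proj_{x_ℓ}(∇f̃(x_ℓ, μ_ℓ)) = −η_ℓ` has norm at most `δ_ℓ`,
so `z_k = x_{φ k}`, `ν_k = μ_{φ k}` witness stationarity. -/

section ShrinkingSequences

variable {u : ℕ → ℝ} {θ : ℝ}

lemma pos_of_succ_eq_mul_or_eq (hθ : 0 < θ) (h0 : 0 < u 0)
    (hstep : ∀ ℓ, u (ℓ + 1) = θ * u ℓ ∨ u (ℓ + 1) = u ℓ) (ℓ : ℕ) : 0 < u ℓ := by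
  induction ℓ with
  | zero => exact h0
  | succ ℓ ih =>
    rcases hstep ℓ with h | h
    · rw [h]; exact mul_pos hθ ih
    · rw [h]; exact ih

lemma antitone_of_succ_eq_mul_or_eq (hθ : θ ≤ 1) (hpos : ∀ ℓ, 0 < u ℓ)
    (hstep : ∀ ℓ, u (ℓ + 1) = θ * u ℓ ∨ u (ℓ + 1) = u ℓ) : Antitone u := by
  refine antitone_nat_of_succ_le fun ℓ => ?_
  rcases hstep ℓ with h | h
  · rw [h]; exact mul_le_of_le_one_left (hpos ℓ).le hθ
  · exact h.le

lemma tendsto_comp_nhds_zero_of_succ_le_mul {φ : ℕ → ℕ} (hθ0 : 0 ≤ θ) (hθ1 : θ < 1)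
    (hu : Antitone u) (hnonneg : ∀ ℓ, 0 ≤ u ℓ) (hφ : StrictMono φ)
    (hshrink : ∀ k, u (φ k + 1) ≤ θ * u (φ k)) :
    Tendsto (fun k => u (φ k)) atTop (𝓝 0) := by
  have hgeom : ∀ k, u (φ k) ≤ θ ^ k * u (φ 0) := by
    intro k
    induction k with
    | zero => simp
    | succ k ih =>
      calc u (φ (k + 1)) ≤ u (φ k + 1) := hu (hφ (Nat.lt_succ_self k))
        _ ≤ θ * u (φ k) := hshrink k
        _ ≤ θ * (θ ^ k * u (φ 0)) := mul_le_mul_of_nonneg_left ih hθ0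
        _ = θ ^ (k + 1) * u (φ 0) := by ring
  have hlim : Tendsto (fun k => θ ^ k * u (φ 0)) atTop (𝓝 0) := by
    simpa using (tendsto_pow_atTop_nhds_zero_of_lt_one hθ0 hθ1).mul_const (u (φ 0))
  exact squeeze_zero (fun k => hnonneg (φ k)) hgeom hlim

end ShrinkingSequences

lemma norm_sphereProj_gradient {n : ℕ} (ft : EuclideanSpace ℝ (Fin n) → ℝ → ℝ)
    (x : EuclideanSpace ℝ (Fin n)) (μ : ℝ) :
    ‖sphereProj x (gradient (fun y => ft y μ) x)‖ = ‖rssdDir ft x μ‖ := by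
  rw [rssdDir, norm_neg]

namespace IsRSSDIteration

variable {n : ℕ} {ft : EuclideanSpace ℝ (Fin n) → ℝ → ℝ} {θμ θδ β σ abar : ℝ}
  {x : ℕ → EuclideanSpace ℝ (Fin n)} {μ δ : ℕ → ℝ}

lemma mu_succ_eq_mul_or_eq (hiter : IsRSSDIteration ft θμ θδ β σ abar x μ δ) (ℓ : ℕ) :
    μ (ℓ + 1) = θμ * μ ℓ ∨ μ (ℓ + 1) = μ ℓ := by
  by_cases h : ‖rssdDir ft (x ℓ) (μ ℓ)‖ ≤ δ ℓ
  · exact Or.inl (hiter.step_small ℓ h).1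
  · exact Or.inr (hiter.step_big ℓ h).1

lemma delta_succ_eq_mul_or_eq (hiter : IsRSSDIteration ft θμ θδ β σ abar x μ δ) (ℓ : ℕ) :
    δ (ℓ + 1) = θδ * δ ℓ ∨ δ (ℓ + 1) = δ ℓ := by
  by_cases h : ‖rssdDir ft (x ℓ) (μ ℓ)‖ ≤ δ ℓ
  · exact Or.inl (hiter.step_small ℓ h).2.1
  · exact Or.inr (hiter.step_big ℓ h).2.1

lemma mu_pos (hiter : IsRSSDIteration ft θμ θδ β σ abar x μ δ) (ℓ : ℕ) : 0 < μ ℓ :=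
  pos_of_succ_eq_mul_or_eq hiter.hθμ.1 hiter.hμ0 hiter.mu_succ_eq_mul_or_eq ℓ

lemma delta_pos (hiter : IsRSSDIteration ft θμ θδ β σ abar x μ δ) (ℓ : ℕ) : 0 < δ ℓ :=
  pos_of_succ_eq_mul_or_eq hiter.hθδ.1 hiter.hδ0 hiter.delta_succ_eq_mul_or_eq ℓ

lemma tendsto_mu_comp {φ : ℕ → ℕ} (hiter : IsRSSDIteration ft θμ θδ β σ abar x μ δ)
    (hφ : StrictMono φ) (hφK : ∀ k, ‖rssdDir ft (x (φ k)) (μ (φ k))‖ ≤ δ (φ k)) :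
    Tendsto (fun k => μ (φ k)) atTop (𝓝 0) :=
  tendsto_comp_nhds_zero_of_succ_le_mul hiter.hθμ.1.le hiter.hθμ.2
    (antitone_of_succ_eq_mul_or_eq hiter.hθμ.2.le hiter.mu_pos hiter.mu_succ_eq_mul_or_eq)
    (fun ℓ => (hiter.mu_pos ℓ).le) hφ fun k => (hiter.step_small (φ k) (hφK k)).1.le

lemma tendsto_delta_comp {φ : ℕ → ℕ} (hiter : IsRSSDIteration ft θμ θδ β σ abar x μ δ)
    (hφ : StrictMono φ) (hφK : ∀ k, ‖rssdDir ft (x (φ k)) (μ (φ k))‖ ≤ δ (φ k)) :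
    Tendsto (fun k => δ (φ k)) atTop (𝓝 0) :=
  tendsto_comp_nhds_zero_of_succ_le_mul hiter.hθδ.1.le hiter.hθδ.2
    (antitone_of_succ_eq_mul_or_eq hiter.hθδ.2.le hiter.delta_pos hiter.delta_succ_eq_mul_or_eq)
    (fun ℓ => (hiter.delta_pos ℓ).le) hφ fun k => (hiter.step_small (φ k) (hφK k)).2.1.le

end IsRSSDIteration

theorem rssd_accumulation_point_is_smoothing_stationary_general (n : ℕ)
    (ft : EuclideanSpace ℝ (Fin n) → ℝ → ℝ)
    (θμ θδ β σ abar : ℝ) (x : ℕ → EuclideanSpace ℝ (Fin n)) (μ δ : ℕ → ℝ)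
    (hiter : IsRSSDIteration ft θμ θδ β σ abar x μ δ)
    (xs : EuclideanSpace ℝ (Fin n)) (φ : ℕ → ℕ) (hφ : StrictMono φ)
    (hφK : ∀ k, ‖rssdDir ft (x (φ k)) (μ (φ k))‖ ≤ δ (φ k))
    (hacc : Filter.Tendsto (fun k => x (φ k)) Filter.atTop (nhds xs)) :
    ∃ (z : ℕ → EuclideanSpace ℝ (Fin n)) (ν : ℕ → ℝ),
      (∀ k, ‖z k‖ = 1) ∧ Filter.Tendsto z Filter.atTop (nhds xs) ∧
      (∀ k, 0 < ν k) ∧ Filter.Tendsto ν Filter.atTop (nhds 0) ∧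
      Filter.Tendsto (fun k => sphereProj (z k) (gradient (fun y => ft y (ν k)) (z k)))
        Filter.atTop (nhds 0) := by
  refine ⟨fun k => x (φ k), fun k => μ (φ k), fun k => hiter.sphere (φ k), hacc,
    fun k => hiter.mu_pos (φ k), hiter.tendsto_mu_comp hφ hφK, ?_⟩
  refine squeeze_zero_norm (fun k => ?_) (hiter.tendsto_delta_comp hφ hφK)
  rw [norm_sphereProj_gradient]
  exact hφK k

/-- Any accumulation point `x*` of the subsequence `(x_ℓ)_{ℓ ∈ K}` of the RSSD iterates,
where `K = {ℓ : ‖η_ℓ‖ ≤ δ_ℓ}`, is a stationary point of `f` associated with the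
smoothing function `f̃` on the sphere: there exist sequences `z_k ∈ S^{n−1}` with
`z_k → x*` and `μ_k → 0⁺` such that `Proj_{z_k}(∇_x f̃(z_k, μ_k)) → 0`. -/
theorem rssd_accumulation_point_is_smoothing_stationary (n : ℕ) (hn : 1 ≤ n)
    (f : EuclideanSpace ℝ (Fin n) → ℝ) (ft : EuclideanSpace ℝ (Fin n) → ℝ → ℝ)
    (κ : ℝ) (ω : ℝ → ℝ) (hsm : IsSmoothingFun f ft κ ω)
    (θμ θδ β σ abar : ℝ) (x : ℕ → EuclideanSpace ℝ (Fin n)) (μ δ : ℕ → ℝ)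
    (hiter : IsRSSDIteration ft θμ θδ β σ abar x μ δ)
    (xs : EuclideanSpace ℝ (Fin n)) (φ : ℕ → ℕ) (hφ : StrictMono φ)
    (hφK : ∀ k, ‖rssdDir ft (x (φ k)) (μ (φ k))‖ ≤ δ (φ k))
    (hacc : Filter.Tendsto (fun k => x (φ k)) Filter.atTop (nhds xs)) :
    ∃ (z : ℕ → EuclideanSpace ℝ (Fin n)) (ν : ℕ → ℝ),
      (∀ k, ‖z k‖ = 1) ∧ Filter.Tendsto z Filter.atTop (nhds xs) ∧
      (∀ k, 0 < ν k) ∧ Filter.Tendsto ν Filter.atTop (nhds 0) ∧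
      Filter.Tendsto (fun k => sphereProj (z k) (gradient (fun y => ft y (ν k)) (z k)))
        Filter.atTop (nhds 0) :=
  rssd_accumulation_point_is_smoothing_stationary_general n ft θμ θδ β σ abar x μ δ hiter xs φ hφ
    hφK hacc
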